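/- In the Perfekt setup (without any density assumption), the restriction operator J : X* → E₀*, J(x*) = x*|_{E₀} (where elements of E₀ are regarded as elements of X), is a well-defined bounded linear operator with dense range in E₀* = (E₀, ‖·‖_∞)*. -/

import Mathlib

/-- A bounded continuous function vanishes at infinity if `{t | ε ≤ ‖f t‖}` is compact
for every `ε > 0`. -/
def ZeroAtInfty {L Y : Type*} [TopologicalSpace L] [NormedAddCommGroup Y]
    (f : BoundedContinuousFunction L Y) : Prop :=
  ∀ ε > (0 : ℝ), IsCompact {t : L | ε ≤ ‖f t‖}

/-- The subspace of `C_b(L, Y)` of functions vanishing at infinity, i.e. `C₀(L, Y)`. -/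
def zeroAtInftySubmodule (L Y : Type*) [TopologicalSpace L] [NormedAddCommGroup Y]
    [NormedSpace ℝ Y] : Submodule ℝ (BoundedContinuousFunction L Y) where
  carrier := {f | ZeroAtInfty f}
  zero_mem' := by
    intro ε hε
    have h : {t : L | ε ≤ ‖(0 : BoundedContinuousFunction L Y) t‖} = ∅ := by
      ext t
      simp only [BoundedContinuousFunction.coe_zero, Pi.zero_apply, norm_zero,
        Set.mem_setOf_eq, Set.mem_empty_iff_false, iff_false, not_le]
      exact hε
    rw [h]; exact isCompact_empty
  add_mem' := by
    rintro f g hf hg ε hε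
    have h := (hf (ε / 2) (by linarith)).union (hg (ε / 2) (by linarith))
    refine h.of_isClosed_subset (isClosed_le continuous_const ((f + g).continuous.norm)) ?_
    intro t ht
    have ht' : ε ≤ ‖(f + g) t‖ := ht
    by_contra hc
    simp only [Set.mem_union, Set.mem_setOf_eq, not_or, not_le] at hc
    have hb : ‖(f + g) t‖ ≤ ‖f t‖ + ‖g t‖ := by
      rw [BoundedContinuousFunction.add_apply]; exact norm_add_le _ _
    linarith [hc.1, hc.2]
  smul_mem' := by
    rintro c f hf ε hε
    by_cases hc : c = 0
    · subst hc
      have h : {t : L | ε ≤ ‖((0 : ℝ) • f) t‖} = ∅ := by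
        ext t
        simp only [Set.mem_setOf_eq, Set.mem_empty_iff_false, iff_false, not_le]
        rw [BoundedContinuousFunction.coe_smul]
        simpa using hε
      rw [h]; exact isCompact_empty
    · have hcn : (0 : ℝ) < ‖c‖ := norm_pos_iff.mpr hc
      have h := hf (ε / ‖c‖) (by positivity)
      refine h.of_isClosed_subset (isClosed_le continuous_const ((c • f).continuous.norm)) ?_
      intro t ht
      have ht' : ε ≤ ‖(c • f) t‖ := ht
      have heq : ‖(c • f) t‖ = ‖c‖ * ‖f t‖ := by
        rw [BoundedContinuousFunction.coe_smul]; simp [norm_smul]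
      rw [heq] at ht'
      have : ε / ‖c‖ ≤ ‖f t‖ := by
        rw [div_le_iff₀ hcn]; linarith [mul_comm ‖c‖ ‖f t‖]
      exact this

/-- The subspace `E` of `C_b(ℒ, Y)` consisting of the functions `x̂ : T ↦ T x` for `x ∈ X`. -/
def perfektE {X Y ι : Type*} [NormedAddCommGroup X] [NormedSpace ℝ X]
    [NormedAddCommGroup Y] [NormedSpace ℝ Y] [TopologicalSpace ι]
    (T : ι → X →L[ℝ] Y) : Submodule ℝ (BoundedContinuousFunction ι Y) where
  carrier := {f | ∃ x : X, ∀ i, f i = T i x}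
  zero_mem' := ⟨0, fun i => by simp⟩
  add_mem' := by
    rintro f g ⟨x, hx⟩ ⟨y, hy⟩
    exact ⟨x + y, fun i => by simp [hx i, hy i]⟩
  smul_mem' := by
    rintro c f ⟨x, hx⟩
    exact ⟨c • x, fun i => by simp [hx i]⟩

/-!
Via the closed graph theorem, `x̂ ↦ x` is a bounded operator `R : E₀ → X`, and `J x' = x' ∘ R`.
Given `φ ∈ E₀*`, extend it by Hahn–Banach to `Φ` on `C_b(ℒ, Y)`. A gliding-hump argument shows
that `Φ` is tight on `C₀(ℒ, Y)`: for every `ε > 0` there is a compact `K` with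
`|Φ g| ≤ ε ‖g‖` whenever `g ∈ C₀` vanishes on `K`. Otherwise there are `gₙ ∈ C₀` with
`‖gₙ‖ ≤ 1 < Φ gₙ / ε`, each vanishing wherever an earlier one has size `≥ δ`; then
`‖∑_{n<N} gₙ‖ ≤ 1 + N δ` while `Φ (∑_{n<N} gₙ) ≥ N ε`, impossible for small `δ` and large `N`.
With a Urysohn function `χ` equal to `1` on `K` and of compact support, `x' := Φ (χ x̂)` is
bounded by Banach–Steinhaus, and `φ f - x' (R f) = Φ ((1 - χ) f)` has size at most `ε ‖f‖`.
-/

open Set Finset BoundedContinuousFunction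

theorem sum_range_le_one_add_mul_of_hump {a : ℕ → ℝ} {δ : ℝ} (hδ : 0 ≤ δ) (ha : ∀ n, a n ≤ 1)
    (hhump : ∀ m n, m < n → δ ≤ a m → a n = 0) (N : ℕ) :
    ∑ n ∈ range N, a n ≤ 1 + N * δ := by
  suffices ∀ N : ℕ, ∑ n ∈ range N, a n ≤ 1 + N * δ ∧
      ((∀ m < N, a m < δ) → ∑ n ∈ range N, a n ≤ N * δ) from (this N).1
  intro N
  induction N with
  | zero => simp
  | succ N ih =>
    rw [sum_range_succ]
    push_cast
    refine ⟨?_, fun hsmall => ?_⟩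
    · by_cases hbig : ∃ m < N, δ ≤ a m
      · obtain ⟨m, hm, hδm⟩ := hbig
        linarith [hhump m N hm hδm, ih.1]
      · push Not at hbig
        linarith [ih.2 hbig, ha N]
    · linarith [ih.2 fun m hm => hsmall m (by omega), hsmall N (by omega)]

theorem norm_sum_range_le_one_add_mul_of_hump {Y ι : Type*} [NormedAddCommGroup Y]
    [TopologicalSpace ι] {g : ℕ → ι →ᵇ Y} {δ : ℝ} (hδ : 0 ≤ δ)
    (hg : ∀ n, ‖g n‖ ≤ 1) (hhump : ∀ m n, m < n → ∀ t, δ ≤ ‖g m t‖ → g n t = 0) (N : ℕ) :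
    ‖∑ n ∈ range N, g n‖ ≤ 1 + N * δ := by
  refine (norm_le (by positivity)).2 fun t => ?_
  calc ‖(∑ n ∈ range N, g n) t‖ = ‖∑ n ∈ range N, g n t‖ := by
        rw [BoundedContinuousFunction.coe_sum, Finset.sum_apply]
    _ ≤ ∑ n ∈ range N, ‖g n t‖ := norm_sum_le _ _
    _ ≤ 1 + N * δ := sum_range_le_one_add_mul_of_hump hδ
        (fun n => (norm_coe_le_norm _ t).trans (hg n))
        (fun m n hmn h => by rw [hhump m n hmn t h, norm_zero]) N

section

variable {X Y ι : Type*} [NormedAddCommGroup X] [NormedSpace ℝ X]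
  [NormedAddCommGroup Y] [NormedSpace ℝ Y]

theorem eq_of_forall_apply_eq {T : ι → X →L[ℝ] Y} (hinj : ∀ x, (∀ i, T i x = 0) → x = 0)
    {x y : X} (h : ∀ i, T i x = T i y) : x = y :=
  sub_eq_zero.1 <| hinj _ fun i => by rw [map_sub, h, sub_self]

variable [TopologicalSpace ι]

theorem mem_zeroAtInftySubmodule_of_hasCompactSupport {f : ι →ᵇ Y} (hf : HasCompactSupport f) :
    f ∈ zeroAtInftySubmodule ι Y := fun ε hε =>
  hf.isCompact.of_isClosed_subset (isClosed_le continuous_const f.continuous.norm)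
    fun t ht => subset_tsupport f fun h => by
      simp only [mem_ofPred_eq, h, norm_zero] at ht
      linarith

theorem exists_smul_norm_le_one_lt_apply {E : Type*} [NormedAddCommGroup E] [NormedSpace ℝ E]
    (Φ : E →L[ℝ] ℝ) {g : E} {ε : ℝ} (hg : ε * ‖g‖ < |Φ g|) :
    ∃ c : ℝ, ‖c • g‖ ≤ 1 ∧ ε < Φ (c • g) := by
  have hg0 : 0 < ‖g‖ := norm_pos_iff.2 fun h => by simp [h] at hg
  refine ⟨‖g‖⁻¹ * SignType.sign (Φ g), ?_, ?_⟩
  · rw [norm_smul, norm_mul, norm_inv, norm_norm, mul_right_comm, inv_mul_cancel₀ hg0.ne',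
      one_mul]
    rcases lt_trichotomy (Φ g) 0 with h | h | h <;> simp [h]
  · rw [map_smul, smul_eq_mul, mul_assoc, sign_mul_self, lt_inv_mul_iff₀ hg0]
    linarith

theorem exists_seq_eq_zero_of_le_norm {P : (ι →ᵇ Y) → Prop}
    (hP : ∀ g, P g → g ∈ zeroAtInftySubmodule ι Y)
    (hsel : ∀ K : Set ι, IsCompact K → ∃ g, P g ∧ ∀ t ∈ K, g t = 0) {δ : ℝ} (hδ : 0 < δ) :
    ∃ g : ℕ → ι →ᵇ Y, (∀ n, P (g n)) ∧ ∀ m n, m < n → ∀ t, δ ≤ ‖g m t‖ → g n t = 0 := by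
  choose next hnextP hnext0 using hsel
  let step : {K : Set ι // IsCompact K} → {K : Set ι // IsCompact K} := fun K =>
    ⟨K.1 ∪ {t | δ ≤ ‖next K.1 K.2 t‖}, K.2.union (hP _ (hnextP K.1 K.2) δ hδ)⟩
  let K : ℕ → {K : Set ι // IsCompact K} := fun n => step^[n] ⟨∅, isCompact_empty⟩
  have hK_succ (n : ℕ) : (K (n + 1)).1 = (K n).1 ∪ {t | δ ≤ ‖next (K n).1 (K n).2 t‖} := by
    simp only [K, Function.iterate_succ_apply']
    rfl
  have hK : Monotone fun n => (K n).1 :=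
    monotone_nat_of_le_succ fun n => (hK_succ n).symm ▸ subset_union_left
  refine ⟨fun n => next (K n).1 (K n).2, fun n => hnextP _ _, fun m n hmn t ht =>
    hnext0 _ _ t (hK (Nat.succ_le_of_lt hmn) ?_)⟩
  show t ∈ (K (m + 1)).1
  rw [hK_succ]
  exact Or.inr ht

theorem exists_isCompact_abs_le_of_eqOn_zero (Φ : (ι →ᵇ Y) →L[ℝ] ℝ) {ε : ℝ} (hε : 0 < ε) :
    ∃ K : Set ι, IsCompact K ∧ ∀ g ∈ zeroAtInftySubmodule ι Y,
      (∀ t ∈ K, g t = 0) → |Φ g| ≤ ε * ‖g‖ := by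
  by_contra! hcon
  have hsel (K : Set ι) (hK : IsCompact K) : ∃ g : ι →ᵇ Y,
      (g ∈ zeroAtInftySubmodule ι Y ∧ ‖g‖ ≤ 1 ∧ ε < Φ g) ∧ ∀ t ∈ K, g t = 0 := by
    obtain ⟨g, hg, hgK, hgΦ⟩ := hcon K hK
    obtain ⟨c, hc1, hcΦ⟩ := exists_smul_norm_le_one_lt_apply Φ hgΦ
    exact ⟨c • g, ⟨Submodule.smul_mem _ c hg, hc1, hcΦ⟩, fun t ht => by simp [hgK t ht]⟩
  set δ := ε / (2 * ‖Φ‖ + 1)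
  have hδ : 0 < δ := by positivity
  have hΦδ : ‖Φ‖ * δ ≤ ε / 2 := by
    rw [mul_div_assoc', div_le_div_iff₀ (by positivity) two_pos]
    nlinarith
  obtain ⟨g, hgP, hhump⟩ := exists_seq_eq_zero_of_le_norm (fun _ hg => hg.1) hsel hδ
  obtain ⟨N, hN⟩ := exists_nat_gt (2 * ‖Φ‖ / ε)
  have hlower : N * ε ≤ Φ (∑ n ∈ range N, g n) := by
    rw [map_sum]
    simpa using Finset.sum_le_sum fun n (_ : n ∈ range N) => (hgP n).2.2.le
  have hupper : Φ (∑ n ∈ range N, g n) ≤ ‖Φ‖ * (1 + N * δ) :=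
    (le_abs_self _).trans <| (Φ.le_opNorm _).trans <| mul_le_mul_of_nonneg_left
      (norm_sum_range_le_one_add_mul_of_hump hδ.le (fun n => (hgP n).2.1) hhump N) (norm_nonneg _)
  rw [div_lt_iff₀ hε] at hN
  nlinarith [mul_le_mul_of_nonneg_left hΦδ (Nat.cast_nonneg (α := ℝ) N)]

theorem exists_clm_boundedContinuousFunction_apply [CompleteSpace X] (S : ι → X →L[ℝ] Y)
    (hcont : ∀ x, Continuous fun i => S i x) (hbdd : ∀ x, ∃ C, ∀ i, ‖S i x‖ ≤ C) :
    ∃ A : X →L[ℝ] ι →ᵇ Y, ∀ x i, A x i = S i x := by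
  obtain ⟨M, hM⟩ := banach_steinhaus hbdd
  have hM' (i : ι) : ‖S i‖ ≤ max M 0 := (hM i).trans (le_max_left _ _)
  let A : X →ₗ[ℝ] ι →ᵇ Y :=
    { toFun := fun x => ofNormedAddCommGroup (fun i => S i x) (hcont x) (max M 0 * ‖x‖)
        fun i => (S i).le_of_opNorm_le (hM' i) x
      map_add' := fun x y => by ext; simp
      map_smul' := fun c x => by ext; simp }
  exact ⟨A.mkContinuous (max M 0) fun x =>
    norm_ofNormedAddCommGroup_le (hcont x) (by positivity)
      fun i => (S i).le_of_opNorm_le (hM' i) x, fun x i => rfl⟩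

theorem norm_sub_le_of_eq_smul {f g : ι →ᵇ Y} {χ : ι → ℝ} (hχ : ∀ t, χ t ∈ Icc (0 : ℝ) 1)
    (hg : ∀ t, g t = χ t • f t) : ‖f - g‖ ≤ ‖f‖ :=
  (norm_le (norm_nonneg f)).2 fun t => by
    have h1 : ‖1 - χ t‖ ≤ 1 := by
      rw [Real.norm_eq_abs, abs_le]
      constructor <;> linarith [(hχ t).1, (hχ t).2]
    calc ‖(f - g) t‖ = ‖1 - χ t‖ * ‖f t‖ := by
          rw [BoundedContinuousFunction.sub_apply, hg, ← norm_smul, sub_smul, one_smul]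
      _ ≤ ‖f t‖ := mul_le_of_le_one_left (norm_nonneg _) h1
      _ ≤ ‖f‖ := norm_coe_le_norm f t

theorem denseRange_comp_of_le_zeroAtInftySubmodule [LocallyCompactSpace ι] [T2Space ι]
    [CompleteSpace X] {T : ι → X →L[ℝ] Y} (hTcont : ∀ x, Continuous fun i => T i x)
    {V : Submodule ℝ (ι →ᵇ Y)} (hV : V ≤ zeroAtInftySubmodule ι Y) (R : V →L[ℝ] X)
    (hR : ∀ (f : V) i, (f : ι →ᵇ Y) i = T i (R f)) :
    DenseRange fun x' : X →L[ℝ] ℝ => x'.comp R := by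
  refine (Metric.denseRange_iff (f := fun x' : X →L[ℝ] ℝ => x'.comp R)).2 fun φ r hr => ?_
  obtain ⟨Φ, hΦ, -⟩ := exists_extension_norm_eq V φ
  obtain ⟨K, hK, hKΦ⟩ := exists_isCompact_abs_le_of_eqOn_zero Φ (half_pos hr)
  obtain ⟨χ, hχK, -, hχc, hχ01⟩ :=
    exists_continuous_one_zero_of_isCompact hK isClosed_empty (disjoint_empty K)
  have hχT (x : X) : HasCompactSupport fun i => χ i • T i x := hχc.smul_right
  obtain ⟨A, hA⟩ := exists_clm_boundedContinuousFunction_apply (fun i => χ i • T i)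
    (fun x => χ.continuous.smul (hTcont x))
    fun x => (χ.continuous.smul (hTcont x)).bounded_above_of_compact_support (hχT x)
  refine ⟨Φ.comp A, lt_of_le_of_lt ?_ (half_lt_self hr)⟩
  refine (dist_eq_norm (E := V →L[ℝ] ℝ) _ _).trans_le <|
    ContinuousLinearMap.opNorm_le_bound _ (half_pos hr).le fun f => ?_
  have hAf (t : ι) : A (R f) t = χ t • (f : ι →ᵇ Y) t := by rw [hA, hR]; rfl
  have hAC₀ : A (R f) ∈ zeroAtInftySubmodule ι Y :=
    mem_zeroAtInftySubmodule_of_hasCompactSupport (by convert hχT (R f) using 1; ext; exact hA _ _)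
  have hsub : (φ - (Φ.comp A).comp R) f = Φ (f - A (R f)) := by
    simp [hΦ f]
  rw [hsub, Real.norm_eq_abs]
  refine (hKΦ _ (Submodule.sub_mem _ (hV f.2) hAC₀) fun t ht => ?_).trans
    (mul_le_mul_of_nonneg_left (norm_sub_le_of_eq_smul hχ01 hAf) (half_pos hr).le)
  rw [BoundedContinuousFunction.sub_apply, hAf, hχK ht, Pi.one_apply, one_smul, sub_self]

theorem exists_clm_perfektE_apply_eq [CompleteSpace X] [CompleteSpace Y] {T : ι → X →L[ℝ] Y}
    (hinj : ∀ x, (∀ i, T i x = 0) → x = 0) (hclosed : IsClosed (perfektE T : Set (ι →ᵇ Y))) :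
    ∃ R : perfektE T →L[ℝ] X, ∀ (f : perfektE T) i, (f : ι →ᵇ Y) i = T i (R f) := by
  choose R hR using fun f : perfektE T => f.2
  have huniq {f : perfektE T} {x : X} (hx : ∀ i, (f : ι →ᵇ Y) i = T i x) : R f = x :=
    eq_of_forall_apply_eq hinj fun i => (hR f i).symm.trans (hx i)
  let Ψ : perfektE T →ₗ[ℝ] X :=
    { toFun := R
      map_add' := fun f g => huniq fun i => by simp [hR f i, hR g i]
      map_smul' := fun c f => huniq fun i => by simp [hR f i] }
  have : CompleteSpace (perfektE T) := hclosed.completeSpace_coe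
  have hgraph : (Ψ.graph : Set (perfektE T × X)) = ⋂ i, {p | (p.1 : ι →ᵇ Y) i = T i p.2} := by
    ext p
    simp only [SetLike.mem_coe, LinearMap.mem_graph_iff, mem_iInter, mem_ofPred_eq]
    exact ⟨fun h i => h ▸ hR p.1 i, fun h => (huniq h).symm⟩
  have hclosed_graph : IsClosed (Ψ.graph : Set (perfektE T × X)) := by
    rw [hgraph]
    exact isClosed_iInter fun i => isClosed_eq
      ((continuous_eval_const i).comp (continuous_subtype_val.comp continuous_fst))
      ((T i).continuous.comp continuous_snd)
  exact ⟨.ofIsClosedGraph hclosed_graph, hR⟩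

end

section Perfekt

variable {X Y ι : Type*}
  [NormedAddCommGroup X] [NormedSpace ℝ X] [CompleteSpace X]
  [NormedAddCommGroup Y] [NormedSpace ℝ Y] [CompleteSpace Y]
  [TopologicalSpace ι] [LocallyCompactSpace ι] [T2Space ι]

theorem perfekt_restriction_denseRange_general
    (T : ι → X →L[ℝ] Y)
    (hTcont : ∀ x : X, Continuous fun i => T i x)
    (hsep : ∀ x : X, (∃ C : ℝ, ∀ i, ‖T i x‖ ≤ C) → (∀ i, T i x = 0) → x = 0)
    (hclosed : IsClosed ((perfektE T : Set (BoundedContinuousFunction ι Y)))) :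
    ∃ J : (X →L[ℝ] ℝ) →L[ℝ]
        (↥(perfektE T ⊓ zeroAtInftySubmodule ι Y) →L[ℝ] ℝ),
      (∀ (x' : X →L[ℝ] ℝ) (f : ↥(perfektE T ⊓ zeroAtInftySubmodule ι Y)) (x : X),
          (∀ i, (f : BoundedContinuousFunction ι Y) i = T i x) → J x' f = x' x) ∧
      DenseRange ⇑J := by
  have hinj (x : X) (hx : ∀ i, T i x = 0) : x = 0 := hsep x ⟨0, fun i => by simp [hx i]⟩ hx
  obtain ⟨R, hR⟩ := exists_clm_perfektE_apply_eq hinj hclosed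
  let E₀ := perfektE T ⊓ zeroAtInftySubmodule ι Y
  let incl : E₀ →L[ℝ] perfektE T :=
    E₀.subtypeL.codRestrict _ fun f => (Submodule.mem_inf.1 f.2).1
  let R₀ : E₀ →L[ℝ] X := R.comp incl
  have hR₀ (f : E₀) (i : ι) : (f : ι →ᵇ Y) i = T i (R₀ f) := hR (incl f) i
  refine ⟨.precomp ℝ R₀, fun x' f x hx => ?_,
    denseRange_comp_of_le_zeroAtInftySubmodule hTcont inf_le_right R₀ hR₀⟩
  rw [ContinuousLinearMap.precomp_apply, ContinuousLinearMap.comp_apply,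
    eq_of_forall_apply_eq hinj fun i => (hR₀ f i).symm.trans (hx i)]

/-- In the Perfekt setup, the restriction operator `J : X* → E₀*` is a well-defined bounded
linear operator with dense range. -/
theorem perfekt_restriction_denseRange
    (T : ι → X →L[ℝ] Y) (hTinj : Function.Injective T)
    (hTcont : ∀ x : X, Continuous fun i => T i x)
    (hrefl : Function.Surjective (NormedSpace.inclusionInDoubleDual ℝ X))
    (hsep : ∀ x : X, (∃ C : ℝ, ∀ i, ‖T i x‖ ≤ C) → (∀ i, T i x = 0) → x = 0)
    (hclosed : IsClosed ((perfektE T : Set (BoundedContinuousFunction ι Y)))) :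
    ∃ J : (X →L[ℝ] ℝ) →L[ℝ]
        (↥(perfektE T ⊓ zeroAtInftySubmodule ι Y) →L[ℝ] ℝ),
      (∀ (x' : X →L[ℝ] ℝ) (f : ↥(perfektE T ⊓ zeroAtInftySubmodule ι Y)) (x : X),
          (∀ i, (f : BoundedContinuousFunction ι Y) i = T i x) → J x' f = x' x) ∧
      DenseRange ⇑J :=
  perfekt_restriction_denseRange_general T hTcont hsep hclosed

end Perfekt
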